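/- arXiv:1712.05560 — 5 statements merged into one kernel-verified Lean document; each statement's English description precedes it below -/
import Mathlib

section
/- Let d, m, k be positive integers with 1 ≤ k ≤ 2m+1. If there exists a k-extended Langford sequence L^k_{d,m}, then the set [d, d+3m] ∪ [−d−3m, −d] ∪ {0} (a set of 6m+3 integers) can be partitioned into 2m+1 triples, each of which has element sum equal to zero. -/
/-- Existence of a `k`-extended Langford sequence of defect `d` and length `m`:
a partition of `{1, …, 2m+1} \ {k}` into pairs `{aᵢ, aᵢ + i}` for
`i = d, …, d + m - 1` (so the two members of the `i`-th pair differ by `i`). -/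
def ExtLangford (d m k : ℕ) : Prop :=
  ∃ a : ℕ → ℕ,
    ((Finset.Icc d (d + m - 1)).biUnion (fun i => {a i, a i + i}) =
      (Finset.Icc 1 (2 * m + 1)).erase k) ∧
    (∀ i ∈ Finset.Icc d (d + m - 1), ∀ j ∈ Finset.Icc d (d + m - 1), i ≠ j →
      Disjoint ({a i, a i + i} : Finset ℕ) {a j, a j + j})

set_option maxHeartbeats 1600000 in
theorem langford_zero_sum_triples (d m k : ℕ) (hd : 1 ≤ d) (hm : 1 ≤ m)
    (hk1 : 1 ≤ k) (hk2 : k ≤ 2 * m + 1) (hL : ExtLangford d m k) :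
    ∃ T : Fin (2 * m + 1) → Finset ℤ,
      (∀ i, (T i).card = 3) ∧
      (∀ i, ∑ x ∈ T i, x = 0) ∧
      (∀ i j, i ≠ j → Disjoint (T i) (T j)) ∧
      Finset.univ.biUnion T =
        Finset.Icc (d : ℤ) ((d : ℤ) + 3 * m) ∪
        Finset.Icc (-(d : ℤ) - 3 * m) (-(d : ℤ)) ∪ {0} := by
  obtain ⟨a, hset, hdisj⟩ := hL
  have hb : ∀ j, d ≤ j → j ≤ d + m - 1 →
      1 ≤ a j ∧ a j + j ≤ 2 * m + 1 ∧ a j ≠ k ∧ a j + j ≠ k := by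
    intro j h1 h2
    have hjm : j ∈ Finset.Icc d (d + m - 1) := Finset.mem_Icc.mpr ⟨h1, h2⟩
    have m1 : a j ∈ (Finset.Icc 1 (2*m+1)).erase k := by
      rw [← hset]; exact Finset.mem_biUnion.mpr ⟨j, hjm, by simp⟩
    have m2 : a j + j ∈ (Finset.Icc 1 (2*m+1)).erase k := by
      rw [← hset]; exact Finset.mem_biUnion.mpr ⟨j, hjm, by simp⟩
    rw [Finset.mem_erase, Finset.mem_Icc] at m1 m2
    exact ⟨m1.2.1, m2.2.2, m1.1, m2.1⟩
  have hne : ∀ i j, d ≤ i → i ≤ d+m-1 → d ≤ j → j ≤ d+m-1 → i ≠ j →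
      a i ≠ a j ∧ a i ≠ a j + j ∧ a i + i ≠ a j ∧ a i + i ≠ a j + j := by
    intro i j hi1 hi2 hj1 hj2 hij
    have h := hdisj i (Finset.mem_Icc.mpr ⟨hi1, hi2⟩) j (Finset.mem_Icc.mpr ⟨hj1, hj2⟩) hij
    rw [Finset.disjoint_left] at h
    exact ⟨fun e => h (by simp : a i ∈ ({a i, a i + i} : Finset ℕ)) (by simp [e]),
           fun e => h (by simp : a i ∈ ({a i, a i + i} : Finset ℕ)) (by simp [e]),
           fun e => h (by simp : a i + i ∈ ({a i, a i + i} : Finset ℕ)) (by simp [e]),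
           fun e => h (by simp : a i + i ∈ ({a i, a i + i} : Finset ℕ)) (by simp [e])⟩
  have key : (∀ i : Fin (2*m+1),
      ((if (i : ℕ) < m then
        ({((d + (i : ℕ) : ℕ) : ℤ), ((a (d + (i : ℕ)) + d + m - 1 : ℕ) : ℤ),
          -((a (d + (i : ℕ)) + (d + (i : ℕ)) + d + m - 1 : ℕ) : ℤ)} : Finset ℤ)
      else if (i : ℕ) < 2 * m then
        {-((d + ((i : ℕ) - m) : ℕ) : ℤ), -((a (d + ((i : ℕ) - m)) + d + m - 1 : ℕ) : ℤ),
          ((a (d + ((i : ℕ) - m)) + (d + ((i : ℕ) - m)) + d + m - 1 : ℕ) : ℤ)}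
      else {(0 : ℤ), ((k + d + m - 1 : ℕ) : ℤ), -((k + d + m - 1 : ℕ) : ℤ)})).card = 3) ∧
      (∀ i j : Fin (2*m+1), i ≠ j →
      Disjoint
      (if (i : ℕ) < m then
        ({((d + (i : ℕ) : ℕ) : ℤ), ((a (d + (i : ℕ)) + d + m - 1 : ℕ) : ℤ),
          -((a (d + (i : ℕ)) + (d + (i : ℕ)) + d + m - 1 : ℕ) : ℤ)} : Finset ℤ)
      else if (i : ℕ) < 2 * m then
        {-((d + ((i : ℕ) - m) : ℕ) : ℤ), -((a (d + ((i : ℕ) - m)) + d + m - 1 : ℕ) : ℤ),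
          ((a (d + ((i : ℕ) - m)) + (d + ((i : ℕ) - m)) + d + m - 1 : ℕ) : ℤ)}
      else {(0 : ℤ), ((k + d + m - 1 : ℕ) : ℤ), -((k + d + m - 1 : ℕ) : ℤ)})
      (if (j : ℕ) < m then
        ({((d + (j : ℕ) : ℕ) : ℤ), ((a (d + (j : ℕ)) + d + m - 1 : ℕ) : ℤ),
          -((a (d + (j : ℕ)) + (d + (j : ℕ)) + d + m - 1 : ℕ) : ℤ)} : Finset ℤ)
      else if (j : ℕ) < 2 * m then
        {-((d + ((j : ℕ) - m) : ℕ) : ℤ), -((a (d + ((j : ℕ) - m)) + d + m - 1 : ℕ) : ℤ),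
          ((a (d + ((j : ℕ) - m)) + (d + ((j : ℕ) - m)) + d + m - 1 : ℕ) : ℤ)}
      else {(0 : ℤ), ((k + d + m - 1 : ℕ) : ℤ), -((k + d + m - 1 : ℕ) : ℤ)})) := by
    constructor
    · -- card
      intro i
      split_ifs with h1 h2
      · obtain ⟨b1, b2, -, -⟩ := hb (d + (i : ℕ)) (by omega) (by omega)
        rw [Finset.card_insert_of_notMem (by simp; omega),
          Finset.card_insert_of_notMem (by simp; omega), Finset.card_singleton]
      · obtain ⟨b1, b2, -, -⟩ := hb (d + ((i : ℕ) - m)) (by omega) (by omega)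
        rw [Finset.card_insert_of_notMem (by simp; omega),
          Finset.card_insert_of_notMem (by simp; omega), Finset.card_singleton]
      · rw [Finset.card_insert_of_notMem (by simp; omega),
          Finset.card_insert_of_notMem (by simp; omega), Finset.card_singleton]
    · -- disjoint
      intro i j hij
      have hijv : (i : ℕ) ≠ (j : ℕ) := fun h => hij (Fin.ext h)
      have hiu := i.isLt
      have hju := j.isLt
      split_ifs with h1 h2 h3 h4 h5 h6 h7 h8 <;>
        rw [Finset.disjoint_left] <;> intro x hx hx' <;>
        simp only [Finset.mem_insert, Finset.mem_singleton] at hx hx'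
      · -- A A
        obtain ⟨a1, a2, a3, a4⟩ := hb (d + (i : ℕ)) (by omega) (by omega)
        obtain ⟨b1, b2, b3, b4⟩ := hb (d + (j : ℕ)) (by omega) (by omega)
        obtain ⟨e1, e2, e3, e4⟩ := hne (d + (i : ℕ)) (d + (j : ℕ)) (by omega) (by omega)
          (by omega) (by omega) (by omega)
        omega
      · -- A B
        obtain ⟨a1, a2, a3, a4⟩ := hb (d + (i : ℕ)) (by omega) (by omega)
        obtain ⟨b1, b2, b3, b4⟩ := hb (d + ((j : ℕ) - m)) (by omega) (by omega)
        by_cases e : d + (i : ℕ) = d + ((j : ℕ) - m)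
        · rw [e] at hx; omega
        · obtain ⟨e1, e2, e3, e4⟩ := hne (d + (i : ℕ)) (d + ((j : ℕ) - m)) (by omega)
            (by omega) (by omega) (by omega) e
          omega
      · -- A Z
        obtain ⟨a1, a2, a3, a4⟩ := hb (d + (i : ℕ)) (by omega) (by omega)
        omega
      · -- B A
        obtain ⟨a1, a2, a3, a4⟩ := hb (d + ((i : ℕ) - m)) (by omega) (by omega)
        obtain ⟨b1, b2, b3, b4⟩ := hb (d + (j : ℕ)) (by omega) (by omega)
        by_cases e : d + ((i : ℕ) - m) = d + (j : ℕ)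
        · rw [e] at hx; omega
        · obtain ⟨e1, e2, e3, e4⟩ := hne (d + ((i : ℕ) - m)) (d + (j : ℕ)) (by omega)
            (by omega) (by omega) (by omega) e
          omega
      · -- B B
        obtain ⟨a1, a2, a3, a4⟩ := hb (d + ((i : ℕ) - m)) (by omega) (by omega)
        obtain ⟨b1, b2, b3, b4⟩ := hb (d + ((j : ℕ) - m)) (by omega) (by omega)
        obtain ⟨e1, e2, e3, e4⟩ := hne (d + ((i : ℕ) - m)) (d + ((j : ℕ) - m)) (by omega)
          (by omega) (by omega) (by omega) (by omega)
        omega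
      · -- B Z
        obtain ⟨a1, a2, a3, a4⟩ := hb (d + ((i : ℕ) - m)) (by omega) (by omega)
        omega
      · -- Z A
        obtain ⟨b1, b2, b3, b4⟩ := hb (d + (j : ℕ)) (by omega) (by omega)
        omega
      · -- Z B
        obtain ⟨b1, b2, b3, b4⟩ := hb (d + ((j : ℕ) - m)) (by omega) (by omega)
        omega
      · -- Z Z
        omega
  refine ⟨_, key.1, ?_, key.2, ?_⟩
  · -- sum
    intro i
    split_ifs with h1 h2
    · obtain ⟨b1, b2, -, -⟩ := hb (d + (i : ℕ)) (by omega) (by omega)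
      rw [Finset.sum_insert (by simp; omega), Finset.sum_insert (by simp; omega),
        Finset.sum_singleton]
      omega
    · obtain ⟨b1, b2, -, -⟩ := hb (d + ((i : ℕ) - m)) (by omega) (by omega)
      rw [Finset.sum_insert (by simp; omega), Finset.sum_insert (by simp; omega),
        Finset.sum_singleton]
      omega
    · rw [Finset.sum_insert (by simp; omega), Finset.sum_insert (by simp; omega),
        Finset.sum_singleton]
      omega
  · -- union
    have hsub : (Finset.univ.biUnion (fun i : Fin (2*m+1) =>
        if (i : ℕ) < m then
          ({((d + (i : ℕ) : ℕ) : ℤ), ((a (d + (i : ℕ)) + d + m - 1 : ℕ) : ℤ),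
            -((a (d + (i : ℕ)) + (d + (i : ℕ)) + d + m - 1 : ℕ) : ℤ)} : Finset ℤ)
        else if (i : ℕ) < 2 * m then
          {-((d + ((i : ℕ) - m) : ℕ) : ℤ), -((a (d + ((i : ℕ) - m)) + d + m - 1 : ℕ) : ℤ),
            ((a (d + ((i : ℕ) - m)) + (d + ((i : ℕ) - m)) + d + m - 1 : ℕ) : ℤ)}
        else {(0 : ℤ), ((k + d + m - 1 : ℕ) : ℤ), -((k + d + m - 1 : ℕ) : ℤ)})) ⊆
        Finset.Icc (d : ℤ) ((d : ℤ) + 3 * m) ∪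
        Finset.Icc (-(d : ℤ) - 3 * m) (-(d : ℤ)) ∪ {0} := by
      intro x hx
      rw [Finset.mem_biUnion] at hx
      obtain ⟨i, -, hx⟩ := hx
      have hiu := i.isLt
      simp only [Finset.mem_union, Finset.mem_Icc, Finset.mem_singleton]
      split_ifs at hx with h1 h2 <;>
        simp only [Finset.mem_insert, Finset.mem_singleton] at hx
      · obtain ⟨b1, b2, -, -⟩ := hb (d + (i : ℕ)) (by omega) (by omega)
        omega
      · obtain ⟨b1, b2, -, -⟩ := hb (d + ((i : ℕ) - m)) (by omega) (by omega)
        omega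
      · omega
    refine Finset.eq_of_subset_of_card_le hsub ?_
    rw [Finset.card_biUnion (fun p _ q _ h => key.2 p q h)]
    have hsumc : ∀ p : Fin (2*m+1), p ∈ (Finset.univ : Finset (Fin (2*m+1))) → True := fun _ _ => trivial
    rw [Finset.sum_congr rfl (fun p _ => key.1 p), Finset.sum_const, Finset.card_univ,
      Fintype.card_fin, smul_eq_mul]
    have d1 : Disjoint (Finset.Icc (d : ℤ) ((d : ℤ) + 3 * m))
        (Finset.Icc (-(d : ℤ) - 3 * m) (-(d : ℤ))) := by
      rw [Finset.disjoint_left]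
      intro x hx hx'
      rw [Finset.mem_Icc] at hx hx'
      omega
    have d2 : Disjoint (Finset.Icc (d : ℤ) ((d : ℤ) + 3 * m) ∪
        Finset.Icc (-(d : ℤ) - 3 * m) (-(d : ℤ))) ({0} : Finset ℤ) := by
      rw [Finset.disjoint_left]
      intro x hx hx'
      rw [Finset.mem_union, Finset.mem_Icc, Finset.mem_Icc] at hx
      rw [Finset.mem_singleton] at hx'
      omega
    rw [Finset.card_union_of_disjoint d2, Finset.card_union_of_disjoint d1,
      Int.card_Icc, Int.card_Icc, Finset.card_singleton]
    omega
end

section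
/- Let d, m, k be positive integers with 1 ≤ k ≤ 2m+1. If there exists a k-extended Langford sequence L^k_{d,m}, then the set [d, d+3m] \ {k+d+m−1} can be partitioned into m triples {u, v, w} each satisfying u + v = w. -/
theorem langford_sum_triples (d m k : ℕ) (hd : 1 ≤ d) (hm : 1 ≤ m)
    (hk1 : 1 ≤ k) (hk2 : k ≤ 2 * m + 1) (hL : ExtLangford d m k) :
    ∃ u v w : Fin m → ℤ,
      (∀ i, u i + v i = w i) ∧
      (∀ i, ({u i, v i, w i} : Finset ℤ).card = 3) ∧
      (∀ i j, i ≠ j →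
        Disjoint ({u i, v i, w i} : Finset ℤ) {u j, v j, w j}) ∧
      Finset.univ.biUnion (fun i => ({u i, v i, w i} : Finset ℤ)) =
        (Finset.Icc (d : ℤ) ((d : ℤ) + 3 * m)).erase ((k : ℤ) + d + m - 1) := by
  obtain ⟨a, hcov, hdisj⟩ := hL
  have hmem : ∀ j ∈ Finset.Icc d (d + m - 1),
      1 ≤ a j ∧ a j + j ≤ 2 * m + 1 ∧ a j ≠ k ∧ a j + j ≠ k := by
    intro j hj
    have h1 : a j ∈ (Finset.Icc 1 (2 * m + 1)).erase k := by
      rw [← hcov]; exact Finset.mem_biUnion.2 ⟨j, hj, by simp⟩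
    have h2 : a j + j ∈ (Finset.Icc 1 (2 * m + 1)).erase k := by
      rw [← hcov]; exact Finset.mem_biUnion.2 ⟨j, hj, by simp⟩
    simp only [Finset.mem_erase, Finset.mem_Icc] at h1 h2
    exact ⟨h1.2.1, h2.2.2, h1.1, h2.1⟩
  have hjmem : ∀ i : Fin m, d + i.val ∈ Finset.Icc d (d + m - 1) := by
    intro i
    have := i.isLt
    simp only [Finset.mem_Icc]
    omega
  refine ⟨fun i => (d : ℤ) + i.val,
          fun i => (a (d + i.val) : ℤ) + d + m - 1,
          fun i => (a (d + i.val) : ℤ) + (d + i.val) + d + m - 1, ?_, ?_, ?_, ?_⟩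
  · intro i; push_cast; ring
  · intro i
    obtain ⟨h1, h2, h3, h4⟩ := hmem _ (hjmem i)
    have hi := i.isLt
    rw [Finset.card_eq_three]
    exact ⟨_, _, _, by push_cast; omega, by push_cast; omega, by push_cast; omega, rfl⟩
  · intro i j hij
    obtain ⟨hi1, hi2, hi3, hi4⟩ := hmem _ (hjmem i)
    obtain ⟨hj1, hj2, hj3, hj4⟩ := hmem _ (hjmem j)
    have hi := i.isLt
    have hj := j.isLt
    have hne : d + i.val ≠ d + j.val := by
      intro h; exact hij (Fin.ext (by omega))
    have hd' := hdisj _ (hjmem i) _ (hjmem j) hne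
    simp only [Finset.disjoint_left, Finset.mem_insert, Finset.mem_singleton] at hd'
    have e1 : a (d + i.val) ≠ a (d + j.val) := by
      intro h; exact hd' (Or.inl rfl) (Or.inl h)
    have e2 : a (d + i.val) ≠ a (d + j.val) + (d + j.val) := by
      intro h; exact hd' (Or.inl rfl) (Or.inr h)
    have e3 : a (d + i.val) + (d + i.val) ≠ a (d + j.val) := by
      intro h; exact hd' (Or.inr rfl) (Or.inl h)
    have e4 : a (d + i.val) + (d + i.val) ≠ a (d + j.val) + (d + j.val) := by
      intro h; exact hd' (Or.inr rfl) (Or.inr h)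
    rw [Finset.disjoint_left]
    intro x hx hy
    simp only [Finset.mem_insert, Finset.mem_singleton] at hx hy
    rcases hx with h | h | h <;> rcases hy with h' | h' | h' <;> push_cast at h h' <;> omega
  · ext x
    simp only [Finset.mem_biUnion, Finset.mem_univ, true_and, Finset.mem_insert,
      Finset.mem_singleton, Finset.mem_erase, Finset.mem_Icc]
    constructor
    · rintro ⟨i, hx⟩
      obtain ⟨h1, h2, h3, h4⟩ := hmem _ (hjmem i)
      have hi := i.isLt
      rcases hx with h | h | h <;> push_cast at h <;>
        refine ⟨by omega, by omega, by omega⟩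
    · rintro ⟨hne, hlo, hhi⟩
      by_cases hc : x ≤ (d : ℤ) + m - 1
      · exact ⟨⟨(x - d).toNat, by omega⟩, Or.inl (by push_cast; omega)⟩
      · have hn : ((x - (d + m - 1)).toNat : ℤ) = x - (d + m - 1) := by omega
        have hmem2 : (x - ((d : ℤ) + m - 1)).toNat ∈
            (Finset.Icc 1 (2 * m + 1)).erase k := by
          simp only [Finset.mem_erase, Finset.mem_Icc]
          refine ⟨by omega, by omega, by omega⟩
        rw [← hcov] at hmem2
        obtain ⟨j, hj, hxj⟩ := Finset.mem_biUnion.1 hmem2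
        simp only [Finset.mem_Icc] at hj
        simp only [Finset.mem_insert, Finset.mem_singleton] at hxj
        refine ⟨⟨j - d, by omega⟩, ?_⟩
        have hj' : d + (j - d) = j := by omega
        simp only [Fin.val_mk, hj']
        rcases hxj with h | h
        · refine Or.inr (Or.inl ?_)
          have : ((a j : ℤ)) = x - (d + m - 1) := by rw [← h, hn]
          omega
        · refine Or.inr (Or.inr ?_)
          have : ((a j + j : ℕ) : ℤ) = x - (d + m - 1) := by rw [← h, hn]
          push_cast at this
          omega
end

section
/- Let m, k be positive integers with 1 ≤ k ≤ 2m+1. If there exists a k-extended Langford sequence L^k_{4,m}, then there exist 2m+1 QMR*(3,3,3)s whose 27(2m+1) entries taken together are exactly the set S = [−4, 4] ∪ [32, 40+27m] ∪ [−40−27m, −32]. -/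
/-- A quasi-magic 3-rectangle QMR*(3,3,3): a triple of 3×3 integer matrices with
pairwise distinct entries, all row and column sums zero, whose entrywise sum is
the zero matrix. -/
def IsQMR333 (M : Fin 3 → Matrix (Fin 3) (Fin 3) ℤ) : Prop :=
  Function.Injective (fun p : Fin 3 × Fin 3 × Fin 3 => M p.1 p.2.1 p.2.2) ∧
  (∀ t i, ∑ j, M t i j = 0) ∧ (∀ t j, ∑ i, M t i j = 0) ∧
  (∀ i j, M 0 i j + M 1 i j + M 2 i j = 0)

/-- balanced ternary digit of `x % 3`. -/
def qmrDg (x : ℕ) : ℤ := if x % 3 = 1 then 1 else if x % 3 = 2 then -1 else 0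

/-- The "coarse label" triples built from a Langford sequence `a`:
row `2m` is the special row `(0, k+m+3, -(k+m+3))`; row `s < 2m` with
`i = s/2 + 4` is `±(i, a i + m + 3, -(i + a i + m + 3))`. -/
def qmrQ (m k : ℕ) (a : ℕ → ℕ) (s ℓ : ℕ) : ℤ :=
  if s = 2 * m then
    (if ℓ = 0 then 0 else if ℓ = 1 then (k : ℤ) + m + 3 else -((k : ℤ) + m + 3))
  else if s % 2 = 0 then
    (if ℓ = 0 then ((s / 2 : ℕ) : ℤ) + 4
     else if ℓ = 1 then ((a (s / 2 + 4) : ℤ) + m + 3)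
     else -(((s / 2 : ℕ) : ℤ) + 4) - ((a (s / 2 + 4) : ℤ) + m + 3))
  else
    (if ℓ = 0 then -(((s / 2 : ℕ) : ℤ) + 4)
     else if ℓ = 1 then -((a (s / 2 + 4) : ℤ) + m + 3)
     else (((s / 2 : ℕ) : ℤ) + 4) + ((a (s / 2 + 4) : ℤ) + m + 3))

/-- The QMR family. -/
def qmrM (m k : ℕ) (a : ℕ → ℕ) (s : Fin (2 * m + 1)) (t : Fin 3) :
    Matrix (Fin 3) (Fin 3) ℤ :=
  Matrix.of fun i j =>
    9 * qmrQ m k a s.val ((t.val + i.val + j.val) % 3)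
      + qmrDg (t.val + i.val + 2 * j.val) + 3 * qmrDg (t.val + 2 * i.val + j.val)

lemma qmrDg_cases (x : ℕ) : qmrDg x = 0 ∨ qmrDg x = 1 ∨ qmrDg x = -1 := by
  unfold qmrDg; split_ifs <;> simp

lemma qmrDg_inj (x y : ℕ) (h : qmrDg x = qmrDg y) : x % 3 = y % 3 := by
  unfold qmrDg at h; split_ifs at h <;> omega

lemma qmrQ_sum (m k : ℕ) (a : ℕ → ℕ) (s : ℕ) :
    qmrQ m k a s 0 + qmrQ m k a s 1 + qmrQ m k a s 2 = 0 := by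
  unfold qmrQ; norm_num; split_ifs <;> ring

set_option maxHeartbeats 2000000 in
theorem langford_gives_qmr333 (m k : ℕ) (hm : 1 ≤ m) (hk1 : 1 ≤ k)
    (hk2 : k ≤ 2 * m + 1) (hL : ExtLangford 4 m k) :
    ∃ M : Fin (2 * m + 1) → Fin 3 → Matrix (Fin 3) (Fin 3) ℤ,
      (∀ t, IsQMR333 (M t)) ∧
      Function.Injective
        (fun p : Fin (2 * m + 1) × Fin 3 × Fin 3 × Fin 3 =>
          M p.1 p.2.1 p.2.2.1 p.2.2.2) ∧
      Set.range
        (fun p : Fin (2 * m + 1) × Fin 3 × Fin 3 × Fin 3 =>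
          M p.1 p.2.1 p.2.2.1 p.2.2.2) =
        Set.Icc (-4 : ℤ) 4 ∪ Set.Icc (32 : ℤ) (40 + 27 * m) ∪
        Set.Icc (-40 - 27 * (m : ℤ)) (-32) := by
  obtain ⟨a, hcov, hdisj⟩ := hL
  have hIcc : 4 + m - 1 = m + 3 := by omega
  rw [hIcc] at hcov hdisj
  -- membership facts
  have H1 : ∀ i ∈ Finset.Icc 4 (m + 3),
      (1 ≤ a i ∧ a i ≤ 2 * m + 1 ∧ a i ≠ k ∧ a i + i ≤ 2 * m + 1 ∧ a i + i ≠ k) := by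
    intro i hi
    have h1 : a i ∈ (Finset.Icc 1 (2 * m + 1)).erase k := by
      rw [← hcov]; exact Finset.mem_biUnion.mpr ⟨i, hi, by simp⟩
    have h2 : a i + i ∈ (Finset.Icc 1 (2 * m + 1)).erase k := by
      rw [← hcov]; exact Finset.mem_biUnion.mpr ⟨i, hi, by simp⟩
    simp only [Finset.mem_erase, Finset.mem_Icc] at h1 h2
    exact ⟨h1.2.1, h1.2.2, h1.1, h2.2.2, h2.1⟩
  have H2 : ∀ i ∈ Finset.Icc 4 (m + 3), ∀ i' ∈ Finset.Icc 4 (m + 3), i ≠ i' →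
      (a i ≠ a i' ∧ a i ≠ a i' + i' ∧ a i + i ≠ a i' ∧ a i + i ≠ a i' + i') := by
    intro i hi i' hi' hne
    have hd := hdisj i hi i' hi' hne
    have h1 : a i ∉ ({a i', a i' + i'} : Finset ℕ) :=
      Finset.disjoint_left.mp hd (by simp)
    have h2 : a i + i ∉ ({a i', a i' + i'} : Finset ℕ) :=
      Finset.disjoint_left.mp hd (by simp)
    simp only [Finset.mem_insert, Finset.mem_singleton, not_or] at h1 h2
    exact ⟨h1.1, h1.2, h2.1, h2.2⟩
  -- label membership
  have Qmem : ∀ s < 2 * m + 1, ∀ ℓ < 3,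
      qmrQ m k a s ℓ = 0 ∨ (4 ≤ qmrQ m k a s ℓ ∧ qmrQ m k a s ℓ ≤ 3 * (m : ℤ) + 4) ∨
        (-(3 * (m : ℤ)) - 4 ≤ qmrQ m k a s ℓ ∧ qmrQ m k a s ℓ ≤ -4) := by
    intro s hs ℓ hℓ
    by_cases h1 : s = 2 * m
    · subst h1
      unfold qmrQ
      rw [if_pos rfl]
      split_ifs <;> omega
    · have hi : s / 2 + 4 ∈ Finset.Icc 4 (m + 3) := Finset.mem_Icc.mpr (by omega)
      have HA := H1 _ hi
      unfold qmrQ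
      rw [if_neg h1]
      split_ifs <;> omega
  -- label injectivity
  have Linj : ∀ s < 2 * m + 1, ∀ s' < 2 * m + 1, ∀ ℓ < 3, ∀ ℓ' < 3,
      qmrQ m k a s ℓ = qmrQ m k a s' ℓ' → s = s' ∧ ℓ = ℓ' := by
    intro s hs s' hs' ℓ hℓ ℓ' hℓ' h
    by_cases h1 : s = 2 * m <;> by_cases h2 : s' = 2 * m
    · subst h1; subst h2
      unfold qmrQ at h
      rw [if_pos rfl, if_pos rfl] at h
      split_ifs at h <;> omega
    · subst h1
      have hi' : s' / 2 + 4 ∈ Finset.Icc 4 (m + 3) := Finset.mem_Icc.mpr (by omega)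
      have HA' := H1 _ hi'
      unfold qmrQ at h
      rw [if_pos rfl, if_neg h2] at h
      split_ifs at h <;> omega
    · subst h2
      have hi : s / 2 + 4 ∈ Finset.Icc 4 (m + 3) := Finset.mem_Icc.mpr (by omega)
      have HA := H1 _ hi
      unfold qmrQ at h
      rw [if_pos rfl, if_neg h1] at h
      split_ifs at h <;> omega
    · have hi : s / 2 + 4 ∈ Finset.Icc 4 (m + 3) := Finset.mem_Icc.mpr (by omega)
      have hi' : s' / 2 + 4 ∈ Finset.Icc 4 (m + 3) := Finset.mem_Icc.mpr (by omega)
      have HA := H1 _ hi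
      have HA' := H1 _ hi'
      unfold qmrQ at h
      rw [if_neg h1, if_neg h2] at h
      by_cases hii : s / 2 = s' / 2
      · rw [← hii] at h HA'
        split_ifs at h <;> omega
      · have HB := H2 _ hi _ hi' (by omega)
        split_ifs at h <;> omega
  -- the big map
  have hFval : ∀ (s : Fin (2*m+1)) (t i j : Fin 3), qmrM m k a s t i j =
      9 * qmrQ m k a s.val ((t.val + i.val + j.val) % 3)
        + qmrDg (t.val + i.val + 2 * j.val) + 3 * qmrDg (t.val + 2 * i.val + j.val) :=
    fun _ _ _ _ => rfl
  -- global injectivity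
  have hInj : Function.Injective
      (fun p : Fin (2 * m + 1) × Fin 3 × Fin 3 × Fin 3 =>
        qmrM m k a p.1 p.2.1 p.2.2.1 p.2.2.2) := by
    rintro ⟨s, t, i, j⟩ ⟨s', t', i', j'⟩ h
    simp only [] at h
    rw [hFval, hFval] at h
    have key : ∀ A A' B B' C C' : ℤ, (B = 0 ∨ B = 1 ∨ B = -1) → (C = 0 ∨ C = 1 ∨ C = -1) →
        (B' = 0 ∨ B' = 1 ∨ B' = -1) → (C' = 0 ∨ C' = 1 ∨ C' = -1) →
        9 * A + B + 3 * C = 9 * A' + B' + 3 * C' → A = A' ∧ B = B' ∧ C = C' := by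
      intros A A' B B' C C' h1 h2 h3 h4 h5
      omega
    obtain ⟨hq, hd1, hd2⟩ := key _ _ _ _ _ _
      (qmrDg_cases (t.val + i.val + 2 * j.val)) (qmrDg_cases (t.val + 2 * i.val + j.val))
      (qmrDg_cases (t'.val + i'.val + 2 * j'.val)) (qmrDg_cases (t'.val + 2 * i'.val + j'.val)) h
    have hs := Linj s.val s.isLt s'.val s'.isLt _ (Nat.mod_lt _ (by norm_num)) _
      (Nat.mod_lt _ (by norm_num)) hq
    have e2 := qmrDg_inj _ _ hd1
    have e3 := qmrDg_inj _ _ hd2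
    have ht := t.isLt; have hti := i.isLt; have htj := j.isLt
    have ht' := t'.isLt; have hti' := i'.isLt; have htj' := j'.isLt
    have hcomp : s.val = s'.val ∧ t.val = t'.val ∧ i.val = i'.val ∧ j.val = j'.val := by
      obtain ⟨hss, hll⟩ := hs
      refine ⟨hss, ?_, ?_, ?_⟩ <;> omega
    obtain ⟨c1, c2, c3, c4⟩ := hcomp
    simp only [Prod.mk.injEq, Fin.ext_iff]
    exact ⟨c1, c2, c3, c4⟩
  -- sums
  have hQs : ∀ s : Fin (2 * m + 1), qmrQ m k a s.val 0 + qmrQ m k a s.val 1 +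
      qmrQ m k a s.val 2 = 0 := fun s => qmrQ_sum m k a s.val
  refine ⟨qmrM m k a, ?_, ?_, ?_⟩
  · -- QMR properties
    intro s
    refine ⟨?_, ?_, ?_, ?_⟩
    · rintro ⟨t, i, j⟩ ⟨t', i', j'⟩ h
      have := hInj (a₁ := (s, t, i, j)) (a₂ := (s, t', i', j')) (by exact h)
      simpa using congrArg Prod.snd this
    · intro t i
      have hq := hQs s
      rw [Fin.sum_univ_three, hFval, hFval, hFval]
      fin_cases t <;> fin_cases i <;> simp [qmrDg] <;> omega
    · intro t j
      have hq := hQs s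
      rw [Fin.sum_univ_three, hFval, hFval, hFval]
      fin_cases t <;> fin_cases j <;> simp [qmrDg] <;> omega
    · intro i j
      have hq := hQs s
      show qmrM m k a s 0 i j + qmrM m k a s 1 i j + qmrM m k a s 2 i j = 0
      rw [hFval, hFval, hFval]
      fin_cases i <;> fin_cases j <;> simp [qmrDg] <;> omega
  · exact hInj
  · -- range
    classical
    have hSF : True := trivial
    let SF : Finset ℤ := Finset.Icc (-4 : ℤ) 4 ∪ Finset.Icc (32 : ℤ) (40 + 27 * m) ∪
      Finset.Icc (-40 - 27 * (m : ℤ)) (-32)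
    let F : Fin (2 * m + 1) × Fin 3 × Fin 3 × Fin 3 → ℤ :=
      fun p => qmrM m k a p.1 p.2.1 p.2.2.1 p.2.2.2
    have hsub : Finset.image F Finset.univ ⊆ SF := by
      intro x hx
      simp only [Finset.mem_image, Finset.mem_univ, true_and] at hx
      obtain ⟨⟨s, t, i, j⟩, rfl⟩ := hx
      show (9 * qmrQ m k a s.val ((t.val + i.val + j.val) % 3)
        + qmrDg (t.val + i.val + 2 * j.val) + 3 * qmrDg (t.val + 2 * i.val + j.val)) ∈ SF
      have hQ := Qmem s.val s.isLt ((t.val + i.val + j.val) % 3) (Nat.mod_lt _ (by norm_num))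
      have b1 := qmrDg_cases (t.val + i.val + 2 * j.val)
      have b2 := qmrDg_cases (t.val + 2 * i.val + j.val)
      simp only [SF, Finset.mem_union, Finset.mem_Icc]
      omega
    have hcardSF : SF.card = 54 * m + 27 := by
      have d1 : Disjoint (Finset.Icc (-4 : ℤ) 4) (Finset.Icc (32 : ℤ) (40 + 27 * m)) := by
        rw [Finset.disjoint_left]
        intro x hx hx'
        simp only [Finset.mem_Icc] at hx hx'
        omega
      have d2 : Disjoint (Finset.Icc (-4 : ℤ) 4 ∪ Finset.Icc (32 : ℤ) (40 + 27 * m))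
          (Finset.Icc (-40 - 27 * (m : ℤ)) (-32)) := by
        rw [Finset.disjoint_left]
        intro x hx hx'
        simp only [Finset.mem_union, Finset.mem_Icc] at hx hx'
        omega
      show (Finset.Icc (-4 : ℤ) 4 ∪ Finset.Icc (32 : ℤ) (40 + 27 * m) ∪
        Finset.Icc (-40 - 27 * (m : ℤ)) (-32)).card = 54 * m + 27
      rw [Finset.card_union_of_disjoint d2, Finset.card_union_of_disjoint d1,
        Int.card_Icc, Int.card_Icc, Int.card_Icc]
      omega
    have hcardIm : (Finset.image F Finset.univ).card = 54 * m + 27 := by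
      rw [Finset.card_image_of_injective _ hInj, Finset.card_univ]
      simp [Fintype.card_prod]
      omega
    have hEq : Finset.image F Finset.univ = SF :=
      Finset.eq_of_subset_of_card_le hsub (by omega)
    have hrange : Set.range F = (SF : Set ℤ) := by
      rw [← Set.image_univ, ← Finset.coe_univ, ← Finset.coe_image, hEq]
    show Set.range F = _
    rw [hrange]
    show ((Finset.Icc (-4 : ℤ) 4 ∪ Finset.Icc (32 : ℤ) (40 + 27 * m) ∪
      Finset.Icc (-40 - 27 * (m : ℤ)) (-32) : Finset ℤ) : Set ℤ) = _
    rw [Finset.coe_union, Finset.coe_union, Finset.coe_Icc, Finset.coe_Icc, Finset.coe_Icc]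
end

section
/- Let x, y, z be pairwise distinct integers with x + y + z = 0. Define the 3×3 integer matrices M1 with rows (9x+1, 9z−4, 9y+3), (9z−3, 9y+4, 9x−1), (9y+2, 9x, 9z−2); M2 with rows (9y−3, 9x+4, 9z−1), (9x+2, 9z, 9y−2), (9z+1, 9y−4, 9x+3); and M3 with rows (9z+2, 9y, 9x−2), (9y+1, 9x−4, 9z+3), (9x−3, 9z+4, 9y−1). Then (M1, M2, M3) is a QMR*(3,3,3), the 27 entries of M1, M2, M3 are exactly the set {9x+c, 9y+c, 9z+c : c ∈ [−4,4]}, and the main diagonal of M2 has sum 0. -/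
/-- The triple of 3×3 matrices built from a zero-sum triple `(x, y, z)`. -/
def tripleBlocks (x y z : ℤ) : Fin 3 → Matrix (Fin 3) (Fin 3) ℤ :=
  ![!![9*x + 1, 9*z - 4, 9*y + 3;
      9*z - 3, 9*y + 4, 9*x - 1;
      9*y + 2, 9*x,     9*z - 2],
    !![9*y - 3, 9*x + 4, 9*z - 1;
      9*x + 2, 9*z,     9*y - 2;
      9*z + 1, 9*y - 4, 9*x + 3],
    !![9*z + 2, 9*y,     9*x - 2;
      9*y + 1, 9*x - 4, 9*z + 3;
      9*x - 3, 9*z + 4, 9*y - 1]]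

/-- Which of `x, y, z` occurs in a given entry. -/
def idx3 : Fin 3 → Fin 3 → Fin 3 → Fin 3 :=
  ![![![0,2,1],![2,1,0],![1,0,2]], ![![1,0,2],![0,2,1],![2,1,0]],
    ![![2,1,0],![1,0,2],![0,2,1]]]

/-- The offset of a given entry. -/
def off3 : Fin 3 → Fin 3 → Fin 3 → ℤ :=
  ![![![1,-4,3],![-3,4,-1],![2,0,-2]], ![![-3,4,-1],![2,0,-2],![1,-4,3]],
    ![![2,0,-2],![1,-4,3],![-3,4,-1]]]

lemma entry_eq (x y z : ℤ) (a b c : Fin 3) :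
    tripleBlocks x y z a b c = 9 * ![x,y,z] (idx3 a b c) + off3 a b c := by
  fin_cases a <;> fin_cases b <;> fin_cases c <;>
    simp [tripleBlocks, idx3, off3] <;> ring

lemma off3_mem (a b c : Fin 3) : -4 ≤ off3 a b c ∧ off3 a b c ≤ 4 := by
  fin_cases a <;> fin_cases b <;> fin_cases c <;> simp [off3]

lemma idx_off_inj (a b c d e f : Fin 3) (h1 : idx3 a b c = idx3 d e f)
    (h2 : off3 a b c = off3 d e f) : a = d ∧ b = e ∧ c = f := by
  revert h1 h2; revert a b c d e f; decide

lemma idx_off_surj (i : Fin 3) (c : ℤ) (h1 : -4 ≤ c) (h2 : c ≤ 4) :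
    ∃ p : Fin 3 × Fin 3 × Fin 3,
      idx3 p.1 p.2.1 p.2.2 = i ∧ off3 p.1 p.2.1 p.2.2 = c := by
  interval_cases c <;> fin_cases i <;> decide

theorem tripleBlocks_isQMR333 (x y z : ℤ) (hxy : x ≠ y) (hxz : x ≠ z)
    (hyz : y ≠ z) (hsum : x + y + z = 0) :
    IsQMR333 (tripleBlocks x y z) ∧
    Set.range (fun p : Fin 3 × Fin 3 × Fin 3 =>
        tripleBlocks x y z p.1 p.2.1 p.2.2) =
      {t : ℤ | ∃ c ∈ Set.Icc (-4 : ℤ) 4,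
        t = 9 * x + c ∨ t = 9 * y + c ∨ t = 9 * z + c} ∧
    ∑ i, tripleBlocks x y z 1 i i = 0 := by
  have hv : Function.Injective ![x, y, z] := by
    intro i j h
    fin_cases i <;> fin_cases j <;> simp_all
  refine ⟨⟨?_, ?_, ?_, ?_⟩, ?_, ?_⟩
  · rintro ⟨a, b, c⟩ ⟨d, e, f⟩ h
    simp only [entry_eq] at h
    have o1 := off3_mem a b c
    have o2 := off3_mem d e f
    have hvv : ![x,y,z] (idx3 a b c) = ![x,y,z] (idx3 d e f) := by omega
    have hoo : off3 a b c = off3 d e f := by omega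
    obtain ⟨h1, h2, h3⟩ := idx_off_inj a b c d e f (hv hvv) hoo
    simp [h1, h2, h3]
  · intro t i
    fin_cases t <;> fin_cases i <;>
      simp [tripleBlocks, Fin.sum_univ_three] <;> linarith
  · intro t j
    fin_cases t <;> fin_cases j <;>
      simp [tripleBlocks, Fin.sum_univ_three] <;> linarith
  · intro i j
    fin_cases i <;> fin_cases j <;> simp [tripleBlocks] <;> linarith
  · ext t
    simp only [Set.mem_range, Set.mem_setOf_eq]
    constructor
    · rintro ⟨⟨a, b, c⟩, rfl⟩
      refine ⟨off3 a b c, ⟨(off3_mem a b c).1, (off3_mem a b c).2⟩, ?_⟩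
      rw [entry_eq]
      have : idx3 a b c = 0 ∨ idx3 a b c = 1 ∨ idx3 a b c = 2 := by fin_cases a <;> fin_cases b <;> fin_cases c <;> decide
      rcases this with h | h | h <;> rw [h] <;> simp
    · rintro ⟨c, ⟨h1, h2⟩, h3⟩
      obtain ⟨i, hi⟩ : ∃ i : Fin 3, (9 : ℤ) * ![x,y,z] i + c = t := by
        rcases h3 with h3 | h3 | h3
        exacts [⟨0, by simp [h3]⟩, ⟨1, by simp [h3]⟩, ⟨2, by simp [h3]⟩]
      obtain ⟨p, hp1, hp2⟩ := idx_off_surj i c h1 h2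
      exact ⟨p, by rw [entry_eq, hp1, hp2, hi]⟩
  · simp [tripleBlocks, Fin.sum_univ_three]
    linarith
end

section
/- Let x, y, z be nonzero integers with x + y + z = 0 such that |x|, |y|, |z| are pairwise distinct. Define the 3×6 integer matrix Q with rows (9z+2, −9z−2, 9y+1, −9y−1, 9x−3, 3−9x), (9y, −9y, 9x−4, 4−9x, 9z+4, −9z−4), (9x−2, 2−9x, 9z+3, −9z−3, 9y−1, 1−9y). Then Q is a QMR*(3,6), the submatrix formed by the last four columns of Q is a QMR*(3,4), and the submatrix formed by the last two columns of Q is a QMR*(3,2). -/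
/-- A quasi-magic rectangle QMR*(m,n): an `m × n` matrix of pairwise distinct
integers, all of whose row sums and column sums are zero. -/
def IsQMRstar {m n : ℕ} (M : Matrix (Fin m) (Fin n) ℤ) : Prop :=
  Function.Injective (fun p : Fin m × Fin n => M p.1 p.2) ∧
  (∀ i, ∑ j, M i j = 0) ∧ (∀ j, ∑ i, M i j = 0)

/-- The 3×6 matrix `Q` built from a zero-sum triple `(x, y, z)`. -/
def Qblock (x y z : ℤ) : Matrix (Fin 3) (Fin 6) ℤ :=
  !![9*z + 2, -9*z - 2, 9*y + 1, -9*y - 1, 9*x - 3, 3 - 9*x;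
     9*y,     -9*y,     9*x - 4, 4 - 9*x,  9*z + 4, -9*z - 4;
     9*x - 2, 2 - 9*x,  9*z + 3, -9*z - 3, 9*y - 1, 1 - 9*y]

set_option maxHeartbeats 1000000 in
lemma Qblock_inj (x y z : ℤ) (hy : y ≠ 0) (hsum : x + y + z = 0) :
    Function.Injective (fun p : Fin 3 × Fin 6 => Qblock x y z p.1 p.2) := by
  have e00 : ∀ (hi : (0:ℕ) < 3) (hj : (0:ℕ) < 6), Qblock x y z ⟨0,hi⟩ ⟨0,hj⟩ = 9*z + 2 := fun _ _ => rfl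
  have e01 : ∀ (hi : (0:ℕ) < 3) (hj : (1:ℕ) < 6), Qblock x y z ⟨0,hi⟩ ⟨1,hj⟩ = -9*z - 2 := fun _ _ => rfl
  have e02 : ∀ (hi : (0:ℕ) < 3) (hj : (2:ℕ) < 6), Qblock x y z ⟨0,hi⟩ ⟨2,hj⟩ = 9*y + 1 := fun _ _ => rfl
  have e03 : ∀ (hi : (0:ℕ) < 3) (hj : (3:ℕ) < 6), Qblock x y z ⟨0,hi⟩ ⟨3,hj⟩ = -9*y - 1 := fun _ _ => rfl
  have e04 : ∀ (hi : (0:ℕ) < 3) (hj : (4:ℕ) < 6), Qblock x y z ⟨0,hi⟩ ⟨4,hj⟩ = 9*x - 3 := fun _ _ => rfl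
  have e05 : ∀ (hi : (0:ℕ) < 3) (hj : (5:ℕ) < 6), Qblock x y z ⟨0,hi⟩ ⟨5,hj⟩ = 3 - 9*x := fun _ _ => rfl
  have e10 : ∀ (hi : (1:ℕ) < 3) (hj : (0:ℕ) < 6), Qblock x y z ⟨1,hi⟩ ⟨0,hj⟩ = 9*y := fun _ _ => rfl
  have e11 : ∀ (hi : (1:ℕ) < 3) (hj : (1:ℕ) < 6), Qblock x y z ⟨1,hi⟩ ⟨1,hj⟩ = -9*y := fun _ _ => rfl
  have e12 : ∀ (hi : (1:ℕ) < 3) (hj : (2:ℕ) < 6), Qblock x y z ⟨1,hi⟩ ⟨2,hj⟩ = 9*x - 4 := fun _ _ => rfl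
  have e13 : ∀ (hi : (1:ℕ) < 3) (hj : (3:ℕ) < 6), Qblock x y z ⟨1,hi⟩ ⟨3,hj⟩ = 4 - 9*x := fun _ _ => rfl
  have e14 : ∀ (hi : (1:ℕ) < 3) (hj : (4:ℕ) < 6), Qblock x y z ⟨1,hi⟩ ⟨4,hj⟩ = 9*z + 4 := fun _ _ => rfl
  have e15 : ∀ (hi : (1:ℕ) < 3) (hj : (5:ℕ) < 6), Qblock x y z ⟨1,hi⟩ ⟨5,hj⟩ = -9*z - 4 := fun _ _ => rfl
  have e20 : ∀ (hi : (2:ℕ) < 3) (hj : (0:ℕ) < 6), Qblock x y z ⟨2,hi⟩ ⟨0,hj⟩ = 9*x - 2 := fun _ _ => rfl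
  have e21 : ∀ (hi : (2:ℕ) < 3) (hj : (1:ℕ) < 6), Qblock x y z ⟨2,hi⟩ ⟨1,hj⟩ = 2 - 9*x := fun _ _ => rfl
  have e22 : ∀ (hi : (2:ℕ) < 3) (hj : (2:ℕ) < 6), Qblock x y z ⟨2,hi⟩ ⟨2,hj⟩ = 9*z + 3 := fun _ _ => rfl
  have e23 : ∀ (hi : (2:ℕ) < 3) (hj : (3:ℕ) < 6), Qblock x y z ⟨2,hi⟩ ⟨3,hj⟩ = -9*z - 3 := fun _ _ => rfl
  have e24 : ∀ (hi : (2:ℕ) < 3) (hj : (4:ℕ) < 6), Qblock x y z ⟨2,hi⟩ ⟨4,hj⟩ = 9*y - 1 := fun _ _ => rfl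
  have e25 : ∀ (hi : (2:ℕ) < 3) (hj : (5:ℕ) < 6), Qblock x y z ⟨2,hi⟩ ⟨5,hj⟩ = 1 - 9*y := fun _ _ => rfl
  rintro ⟨p1, p2⟩ ⟨q1, q2⟩ h
  simp only at h
  fin_cases p1 <;> fin_cases p2 <;> fin_cases q1 <;> fin_cases q2 <;>
    first
    | rfl
    | (exfalso;
       simp only [e00,e01,e02,e03,e04,e05,e10,e11,e12,e13,e14,e15,e20,e21,e22,e23,e24,e25] at h;
       omega)

theorem Qblock_isQMRstar (x y z : ℤ) (hx : x ≠ 0) (hy : y ≠ 0) (hz : z ≠ 0)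
    (hsum : x + y + z = 0) (hxy : |x| ≠ |y|) (hxz : |x| ≠ |z|)
    (hyz : |y| ≠ |z|) :
    IsQMRstar (Qblock x y z) ∧
    IsQMRstar (Matrix.of fun (i : Fin 3) (j : Fin 4) =>
      Qblock x y z i ⟨j.val + 2, by have := j.isLt; omega⟩) ∧
    IsQMRstar (Matrix.of fun (i : Fin 3) (j : Fin 2) =>
      Qblock x y z i ⟨j.val + 4, by have := j.isLt; omega⟩) := by
  have inj := Qblock_inj x y z hy hsum
  refine ⟨⟨inj, ?_, ?_⟩, ⟨?_, ?_, ?_⟩, ⟨?_, ?_, ?_⟩⟩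
  · intro i; fin_cases i
    · rw [Fin.sum_univ_six]; show (9*z + 2) + (-9*z - 2) + (9*y + 1) + (-9*y - 1) + (9*x - 3) + (3 - 9*x) = 0; linarith
    · rw [Fin.sum_univ_six]; show (9*y) + (-9*y) + (9*x - 4) + (4 - 9*x) + (9*z + 4) + (-9*z - 4) = 0; linarith
    · rw [Fin.sum_univ_six]; show (9*x - 2) + (2 - 9*x) + (9*z + 3) + (-9*z - 3) + (9*y - 1) + (1 - 9*y) = 0; linarith
  · intro j; fin_cases j
    · rw [Fin.sum_univ_three]; show (9*z + 2) + (9*y) + (9*x - 2) = 0; linarith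
    · rw [Fin.sum_univ_three]; show (-9*z - 2) + (-9*y) + (2 - 9*x) = 0; linarith
    · rw [Fin.sum_univ_three]; show (9*y + 1) + (9*x - 4) + (9*z + 3) = 0; linarith
    · rw [Fin.sum_univ_three]; show (-9*y - 1) + (4 - 9*x) + (-9*z - 3) = 0; linarith
    · rw [Fin.sum_univ_three]; show (9*x - 3) + (9*z + 4) + (9*y - 1) = 0; linarith
    · rw [Fin.sum_univ_three]; show (3 - 9*x) + (-9*z - 4) + (1 - 9*y) = 0; linarith
  · rintro ⟨p1, p2⟩ ⟨q1, q2⟩ h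
    have := inj (a₁ := (p1, ⟨p2.val + 2, by omega⟩)) (a₂ := (q1, ⟨q2.val + 2, by omega⟩)) h
    simp only [Prod.mk.injEq, Fin.mk.injEq] at this
    simp [Prod.ext_iff, Fin.ext_iff, this.1, this.2]; omega
  · intro i; fin_cases i
    · rw [Fin.sum_univ_four]; show (9*y + 1) + (-9*y - 1) + (9*x - 3) + (3 - 9*x) = 0; linarith
    · rw [Fin.sum_univ_four]; show (9*x - 4) + (4 - 9*x) + (9*z + 4) + (-9*z - 4) = 0; linarith
    · rw [Fin.sum_univ_four]; show (9*z + 3) + (-9*z - 3) + (9*y - 1) + (1 - 9*y) = 0; linarith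
  · intro j; fin_cases j
    · rw [Fin.sum_univ_three]; show (9*y + 1) + (9*x - 4) + (9*z + 3) = 0; linarith
    · rw [Fin.sum_univ_three]; show (-9*y - 1) + (4 - 9*x) + (-9*z - 3) = 0; linarith
    · rw [Fin.sum_univ_three]; show (9*x - 3) + (9*z + 4) + (9*y - 1) = 0; linarith
    · rw [Fin.sum_univ_three]; show (3 - 9*x) + (-9*z - 4) + (1 - 9*y) = 0; linarith
  · rintro ⟨p1, p2⟩ ⟨q1, q2⟩ h
    have := inj (a₁ := (p1, ⟨p2.val + 4, by omega⟩)) (a₂ := (q1, ⟨q2.val + 4, by omega⟩)) h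
    simp only [Prod.mk.injEq, Fin.mk.injEq] at this
    simp [Prod.ext_iff, Fin.ext_iff, this.1, this.2]; omega
  · intro i; fin_cases i
    · rw [Fin.sum_univ_two]; show (9*x - 3) + (3 - 9*x) = 0; linarith
    · rw [Fin.sum_univ_two]; show (9*z + 4) + (-9*z - 4) = 0; linarith
    · rw [Fin.sum_univ_two]; show (9*y - 1) + (1 - 9*y) = 0; linarith
  · intro j; fin_cases j
    · rw [Fin.sum_univ_three]; show (9*x - 3) + (9*z + 4) + (9*y - 1) = 0; linarith
    · rw [Fin.sum_univ_three]; show (3 - 9*x) + (-9*z - 4) + (1 - 9*y) = 0; linarith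
end
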